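/- arXiv:0804.2776 — 4 statements merged into one kernel-verified Lean document; each statement's English description precedes it below -/
import Mathlib

section
/- A sequence of positive integers (d_0, ..., d_{n-1}) with n ≥ 2 is the degree sequence of some tree on n vertices if and only if every d_i > 0 and the sum of all d_i equals 2(n-1). -/
open SimpleGraph Finset

/-!
Trees on `n` vertices are exactly the connected graphs with `n - 1` edges, so by the handshake
lemma they are the connected graphs whose degrees sum to `2 (n - 1)`; for `n ≥ 2` connectedness
also rules out vertices of degree `0`. Conversely, for `n ≥ 3` the sum condition forces a
vertex `i` with `d i = 1` and another vertex `j` with `d j ≥ 2`. Realise by induction the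
sequence on the remaining vertices in which `d j` is lowered by one, and attach `i` to `j` as
a leaf: the result is connected with the prescribed degrees, hence a tree. For `n = 2` the
single edge works.
-/

/-- The degree of vertex `v`: the number of its neighbors. -/
noncomputable def gdeg {V : Type*} (G : SimpleGraph V) (v : V) : ℕ :=
  (G.neighborSet v).ncard

namespace SimpleGraph

variable {V : Type*} {G : SimpleGraph V}

lemma gdeg_eq_degree (v : V) [Fintype (G.neighborSet v)] : gdeg G v = G.degree v := by
  rw [gdeg, Set.ncard_eq_toFinset_card', Set.toFinset_card, card_neighborSet_eq_degree]

lemma Preconnected.gdeg_pos [Finite V] [Nontrivial V] (h : G.Preconnected) (v : V) :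
    0 < gdeg G v := by
  have := Fintype.ofFinite V
  classical
  rw [gdeg_eq_degree]
  exact h.degree_pos_of_nontrivial v

lemma isTree_iff_connected_and_sum_gdeg [Fintype V] :
    G.IsTree ↔ G.Connected ∧ ∑ v, gdeg G v = 2 * (Fintype.card V - 1) := by
  classical
  simp_rw [gdeg_eq_degree, sum_degrees_eq_twice_card_edges, isTree_iff_connected_and_card,
    Nat.card_eq_fintype_card, edgeFinset_card]
  refine and_congr_right fun hG => ?_
  have : 0 < Fintype.card V := Fintype.card_pos_iff.mpr hG.nonempty
  omega

lemma gdeg_top [Fintype V] (v : V) : gdeg (⊤ : SimpleGraph V) v = Fintype.card V - 1 := by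
  classical
  rw [gdeg_eq_degree, complete_graph_degree]

lemma isTree_top_of_card_eq_two [Fintype V] (h : Fintype.card V = 2) :
    (⊤ : SimpleGraph V).IsTree := by
  have : Nonempty V := Fintype.card_pos_iff.mp (by omega)
  rw [isTree_iff_connected_and_sum_gdeg]
  simp [gdeg_top, h]

section AttachLeaf

variable {i : V} (H : SimpleGraph {v // v ≠ i}) (j : {v // v ≠ i})

def attachLeaf : SimpleGraph V :=
  H.map (Function.Embedding.subtype _) ⊔ edge i j

variable {H}

lemma Connected.attachLeaf (hH : H.Connected) : (H.attachLeaf j).Connected := by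
  have reach_j : ∀ v, (H.attachLeaf j).Reachable v j := by
    intro v
    by_cases hv : v = i
    · subst hv
      exact Adj.reachable (by simp [SimpleGraph.attachLeaf, edge_adj, Ne.symm j.2])
    · exact ((hH.preconnected ⟨v, hv⟩ j).map
        (Embedding.map (Function.Embedding.subtype _) H).toHom).mono le_sup_left
  have : Nonempty V := ⟨j⟩
  exact Connected.mk fun u v => (reach_j u).trans (reach_j v).symm

lemma neighborSet_attachLeaf_self : (H.attachLeaf j).neighborSet i = {(j : V)} := by
  ext w
  simp only [SimpleGraph.attachLeaf, neighborSet_sup, Set.mem_union, mem_neighborSet, map_adj',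
    Function.Embedding.coe_subtype, edge_adj, Set.mem_singleton_iff]
  grind

lemma gdeg_attachLeaf_self : gdeg (H.attachLeaf j) i = 1 := by
  rw [gdeg, neighborSet_attachLeaf_self, Set.ncard_singleton]

lemma neighborSet_attachLeaf_of_ne (v : {v // v ≠ i}) :
    (H.attachLeaf j).neighborSet v =
      Subtype.val '' H.neighborSet v ∪ (edge i j).neighborSet v := by
  rw [SimpleGraph.attachLeaf, neighborSet_sup]
  congr 1
  exact H.neighborSet_map (Function.Embedding.subtype _) v

lemma gdeg_attachLeaf_of_ne [Finite V] [DecidableEq V] (v : {v // v ≠ i}) :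
    gdeg (H.attachLeaf j) v = gdeg H v + if v = j then 1 else 0 := by
  have hi : i ∉ Subtype.val '' H.neighborSet v := fun ⟨w, _, hw⟩ => w.2 hw
  rw [gdeg, gdeg, neighborSet_attachLeaf_of_ne,
    ← Set.ncard_image_of_injective _ Subtype.val_injective]
  split_ifs with hvj
  · have : (edge i j).neighborSet v = {i} := by
      ext w
      have := j.2
      simp only [mem_neighborSet, edge_adj, hvj, Set.mem_singleton_iff]
      grind
    rw [this, Set.union_singleton, Set.ncard_insert_of_notMem hi (Set.toFinite _)]
  · have : (edge i j).neighborSet v = ∅ := by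
      ext w
      simp [edge_adj, Subtype.ext_iff.not.mp hvj, v.2]
    rw [this, Set.union_empty, add_zero]

end AttachLeaf

end SimpleGraph

section DegreeSequence

variable {V : Type*} [Fintype V] {d : V → ℕ}

lemma add_card_sub_one_le_sum (hpos : ∀ v, 0 < d v) (v : V) :
    d v + (Fintype.card V - 1) ≤ ∑ w, d w := by
  classical
  rw [Fintype.sum_eq_add_sum_subtype_ne d v]
  gcongr
  simpa using Finset.card_nsmul_le_sum univ (fun w : {w // w ≠ v} => d w) 1 fun w _ => hpos w

lemma exists_eq_one_and_two_le (hpos : ∀ v, 0 < d v)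
    (hsum : ∑ v, d v = 2 * (Fintype.card V - 1)) (hV : 3 ≤ Fintype.card V) : ∃ i j, i ≠ j ∧ d i = 1 ∧ 2 ≤ d j := by
  obtain ⟨i, hi⟩ : ∃ i, d i = 1 := by
    by_contra! h
    have := Finset.card_nsmul_le_sum univ (fun v => d v) 2 fun v _ => by
      have := hpos v; have := h v; omega
    simp only [card_univ, smul_eq_mul] at this
    omega
  obtain ⟨j, hj⟩ : ∃ j, 2 ≤ d j := by
    by_contra! h
    have := Finset.sum_le_card_nsmul univ (fun v => d v) 1 fun v _ => by have := h v; omega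
    simp only [card_univ, smul_eq_mul] at this
    omega
  exact ⟨i, j, by rintro rfl; omega, hi, hj⟩

lemma exists_pos_sum_eq_of_eq_one [DecidableEq V] (hpos : ∀ v, 0 < d v)
    (hsum : ∑ v, d v = 2 * (Fintype.card V - 1)) {i : V} (hi : d i = 1) (j : {v // v ≠ i})
    (hj : 2 ≤ d j) :
    ∃ d' : {v // v ≠ i} → ℕ, (∀ v, 0 < d' v) ∧
      ∑ v, d' v = 2 * (Fintype.card {v // v ≠ i} - 1) ∧
      ∀ v, d' v + (if v = j then 1 else 0) = d v := by
  let d' : {v // v ≠ i} → ℕ := fun v => d v - if v = j then 1 else 0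
  have hd' : ∀ v, d' v + (if v = j then 1 else 0) = d v := by
    intro v
    split_ifs with hv
    · subst hv; simp only [d', if_true]; omega
    · simp only [d', if_neg hv, Nat.sub_zero, add_zero]
  refine ⟨d', fun v => ?_, ?_, hd'⟩
  · have := hd' v
    have := hpos v
    split_ifs at * with hv
    · subst hv; omega
    · omega
  · have hcard : Fintype.card {v // v ≠ i} = Fintype.card V - 1 := by simp
    have : 0 < Fintype.card {v // v ≠ i} := Fintype.card_pos_iff.mpr ⟨j⟩
    have := Fintype.sum_eq_add_sum_subtype_ne d i
    simp only [← hd', Finset.sum_add_distrib, Finset.sum_ite_eq', Finset.mem_univ,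
      if_true] at this
    omega

theorem exists_isTree_gdeg_eq (hV : 2 ≤ Fintype.card V) (hpos : ∀ v, 0 < d v)
    (hsum : ∑ v, d v = 2 * (Fintype.card V - 1)) :
    ∃ G : SimpleGraph V, G.IsTree ∧ ∀ v, gdeg G v = d v := by
  classical
  obtain ⟨n, hn⟩ := Nat.exists_eq_add_of_le' hV
  induction n generalizing V with
  | zero =>
    refine ⟨⊤, isTree_top_of_card_eq_two hn, fun v => ?_⟩
    have := add_card_sub_one_le_sum hpos v
    have := hpos v
    rw [gdeg_top, hn]
    omega
  | succ n ih =>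
    obtain ⟨i, j, hij, hi, hj⟩ := exists_eq_one_and_two_le hpos hsum (by omega)
    lift j to {v // v ≠ i} using hij.symm
    obtain ⟨d', hpos', hsum', hd'⟩ := exists_pos_sum_eq_of_eq_one hpos hsum hi j hj
    have hcard : Fintype.card {v // v ≠ i} = n + 2 := by simp [hn]
    obtain ⟨H, hH, hHd⟩ := ih (by omega) hpos' hsum' hcard
    have hdeg : ∀ v, gdeg (H.attachLeaf j) v = d v := by
      intro v
      by_cases hv : v = i
      · subst hv; rw [gdeg_attachLeaf_self, hi]
      · exact (gdeg_attachLeaf_of_ne j ⟨v, hv⟩).trans (by rw [hHd, hd'])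
    refine ⟨H.attachLeaf j, isTree_iff_connected_and_sum_gdeg.mpr
      ⟨hH.connected.attachLeaf j, by simp only [hdeg, hsum]⟩, hdeg⟩

end DegreeSequence

/-- A sequence of positive integers `(d 0, …, d (n-1))` with `n ≥ 2` is the degree
sequence of some tree on `n` vertices iff every `d i > 0` and `∑ d i = 2 (n-1)`. -/
theorem stmt0 (n : ℕ) (hn : 2 ≤ n) (d : Fin n → ℕ) :
    (∃ G : SimpleGraph (Fin n), G.IsTree ∧ ∃ σ : Equiv.Perm (Fin n), ∀ i, gdeg G (σ i) = d i)
      ↔ ((∀ i, 0 < d i) ∧ ∑ i, d i = 2 * (n - 1)) := by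
  have : Nontrivial (Fin n) := Fin.nontrivial_iff_two_le.mpr hn
  constructor
  · rintro ⟨G, hG, σ, hσ⟩
    obtain rfl : d = fun i => gdeg G (σ i) := funext fun i => (hσ i).symm
    refine ⟨fun i => hG.connected.preconnected.gdeg_pos (σ i), ?_⟩
    rw [Equiv.sum_comp σ (gdeg G), (isTree_iff_connected_and_sum_gdeg.mp hG).2, Fintype.card_fin]
  · rintro ⟨hpos, hsum⟩
    obtain ⟨G, hG, hd⟩ := exists_isTree_gdeg_eq (by simpa) hpos (by simpa)
    exact ⟨G, hG, Equiv.refl _, hd⟩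
end

section
/- (Shifting switching preserves treeness and degree sum changes only at u and v.) Let T be a tree with vertices u ≠ v and edges ux₁, ..., uxₖ such that no xᵢ lies on the path from u to v. Then the graph T' obtained by deleting edges ux₁,...,uxₖ and adding edges vx₁,...,vxₖ is again a tree. -/
/-!
Every edge `u xᵢ` of `T` is recovered in `T'` by the path from `u` to `v`, which survives the
deletion because it avoids every `xᵢ`, followed by the new edge `v xᵢ`; hence `T'` is connected.
The new edges are not edges of `T`, since otherwise `u xᵢ v` would be the `uv`-path, so `T'` has
as many edges as `T`, and a connected graph with `|V| - 1` edges is a tree.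
-/

open SimpleGraph Finset

namespace SimpleGraph

variable {V : Type*}

theorem Preconnected.of_forall_adj_reachable {G H : SimpleGraph V} (hG : G.Preconnected)
    (h : ∀ a b, G.Adj a b → H.Reachable a b) : H.Preconnected := by
  intro a b
  obtain ⟨w⟩ := hG a b
  induction w with
  | nil => rfl
  | cons hab _ ih => exact (h _ _ hab).trans ih

theorem edgeSet_deleteEdges_sup_fromEdgeSet {G : SimpleGraph V} {S R : Set (Sym2 V)}
    (hR : ∀ e ∈ R, ¬ e.IsDiag) :
    (G.deleteEdges S ⊔ fromEdgeSet R).edgeSet = G.edgeSet \ S ∪ R := by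
  ext e
  simp only [edgeSet_sup, edgeSet_deleteEdges, edgeSet_fromEdgeSet, Set.mem_union,
    Set.mem_sdiff]
  exact or_congr_right ⟨And.left, fun he => ⟨he, hR e he⟩⟩

theorem card_edgeSet_deleteEdges_sup_fromEdgeSet [Finite V] {G : SimpleGraph V}
    {S R : Set (Sym2 V)} (hS : S ⊆ G.edgeSet) (hR : Disjoint R G.edgeSet)
    (hRdiag : ∀ e ∈ R, ¬ e.IsDiag) (hcard : S.ncard = R.ncard) :
    Nat.card (G.deleteEdges S ⊔ fromEdgeSet R).edgeSet = Nat.card G.edgeSet := by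
  rw [Nat.card_coe_set_eq, edgeSet_deleteEdges_sup_fromEdgeSet hRdiag,
    Set.ncard_union_eq (Disjoint.symm (hR.mono_right Set.sdiff_subset)),
    Set.ncard_sdiff hS, hcard, Nat.sub_add_cancel (hcard ▸ Set.ncard_le_ncard hS),
    Nat.card_coe_set_eq]

theorem IsTree.of_connected_of_card_edgeSet_eq [Finite V] {G H : SimpleGraph V}
    (hG : G.IsTree) (hH : H.Connected) (hcard : Nat.card H.edgeSet = Nat.card G.edgeSet) :
    H.IsTree :=
  isTree_iff_connected_and_card.mpr ⟨hH, hcard ▸ (isTree_iff_connected_and_card.mp hG).2⟩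

section Shift

variable {ι : Type*} {T : SimpleGraph V} {u v : V} {x : ι → V}

theorem ne_of_forall_path_notMem_support (hadj : ∀ i, T.Adj u (x i))
    (hpath : ∀ p : T.Path u v, ∀ i, x i ∉ p.1.support) (i : ι) : x i ≠ v := by
  rintro rfl
  have hp : (Walk.cons (hadj i) Walk.nil).IsPath := by simp [(hadj i).ne]
  exact hpath ⟨_, hp⟩ i (by simp)

theorem not_adj_of_forall_path_notMem_support (huv : u ≠ v) (hadj : ∀ i, T.Adj u (x i))
    (hpath : ∀ p : T.Path u v, ∀ i, x i ∉ p.1.support) (i : ι) : ¬ T.Adj (x i) v := by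
  intro hxv
  have hp : (Walk.cons (hadj i) (Walk.cons hxv Walk.nil)).IsPath := by
    simp [(hadj i).ne, hxv.ne, huv]
  exact hpath ⟨_, hp⟩ i (by simp)

theorem reachable_deleteEdges_of_forall_path_notMem_support (hT : T.Connected)
    (hpath : ∀ p : T.Path u v, ∀ i, x i ∉ p.1.support) :
    (T.deleteEdges (Set.range fun i => s(u, x i))).Reachable u v := by
  obtain ⟨p, hp⟩ := (hT u v).exists_isPath
  refine ⟨p.toDeleteEdges _ ?_⟩
  rintro e he ⟨j, rfl⟩
  exact hpath ⟨p, hp⟩ j (p.snd_mem_support_of_mem_edges he)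

theorem connected_deleteEdges_sup_fromEdgeSet (hT : T.Connected) (hadj : ∀ i, T.Adj u (x i))
    (hpath : ∀ p : T.Path u v, ∀ i, x i ∉ p.1.support) :
    (T.deleteEdges (Set.range fun i => s(u, x i)) ⊔
      fromEdgeSet (Set.range fun i => s(v, x i))).Connected := by
  have hv : ∀ j, (T.deleteEdges (Set.range fun i => s(u, x i)) ⊔
      fromEdgeSet (Set.range fun i => s(v, x i))).Reachable u (x j) := fun j =>
    ((reachable_deleteEdges_of_forall_path_notMem_support hT hpath).mono le_sup_left).trans
      (Adj.reachable (Or.inr ⟨⟨j, rfl⟩, (ne_of_forall_path_notMem_support hadj hpath j).symm⟩))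
  refine (connected_iff _).mpr ⟨hT.preconnected.of_forall_adj_reachable fun a b hab => ?_,
    hT.nonempty⟩
  by_cases hab' : s(a, b) ∈ Set.range fun i => s(u, x i)
  · obtain ⟨j, hj⟩ := hab'
    rcases Sym2.eq_iff.mp hj with ⟨rfl, rfl⟩ | ⟨rfl, rfl⟩
    exacts [hv j, (hv j).symm]
  · exact Adj.reachable (Or.inl (deleteEdges_adj.mpr ⟨hab, hab'⟩))

end Shift

end SimpleGraph

theorem stmt6_general {V : Type*} [Fintype V] (T : SimpleGraph V)
    (hT : T.IsTree) (u v : V) (huv : u ≠ v) (k : ℕ) (x : Fin k → V)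
    (hinj : Function.Injective x) (hadj : ∀ i, T.Adj u (x i))
    (hpath : ∀ p : T.Path u v, ∀ i, x i ∉ p.1.support)
    (T' : SimpleGraph V)
    (hT' : T' = (T.deleteEdges (Set.range fun i => s(u, x i))) ⊔
        SimpleGraph.fromEdgeSet (Set.range fun i => s(v, x i))) :
    T'.IsTree := by
  subst hT'
  refine hT.of_connected_of_card_edgeSet_eq
    (connected_deleteEdges_sup_fromEdgeSet hT.connected hadj hpath)
    (card_edgeSet_deleteEdges_sup_fromEdgeSet ?_ ?_ ?_ ?_)
  · rintro _ ⟨i, rfl⟩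
    exact hadj i
  · refine Set.disjoint_left.mpr ?_
    rintro _ ⟨i, rfl⟩ hvx
    exact not_adj_of_forall_path_notMem_support huv hadj hpath i hvx.symm
  · rintro _ ⟨i, rfl⟩
    exact (ne_of_forall_path_notMem_support hadj hpath i).symm
  · have hsym : ∀ w : V, Function.Injective fun i => s(w, x i) := fun w _ _ h =>
      hinj (Sym2.congr_right.mp h)
    rw [Set.ncard_range_of_injective (hsym u), Set.ncard_range_of_injective (hsym v)]

/-- Shifting preserves treeness: moving the edges `u x₁, …, u xₖ` (where no `xᵢ`
lies on the `uv`-path) to `v x₁, …, v xₖ` yields again a tree. -/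
theorem stmt6 {V : Type*} [Fintype V] [DecidableEq V] (T : SimpleGraph V)
    (hT : T.IsTree) (u v : V) (huv : u ≠ v) (k : ℕ) (x : Fin k → V)
    (hinj : Function.Injective x) (hadj : ∀ i, T.Adj u (x i))
    (hpath : ∀ p : T.Path u v, ∀ i, x i ∉ p.1.support)
    (T' : SimpleGraph V)
    (hT' : T' = (T.deleteEdges (Set.range fun i => s(u, x i))) ⊔
        SimpleGraph.fromEdgeSet (Set.range fun i => s(v, x i))) :
    T'.IsTree :=
  stmt6_general T hT u v huv k x hinj hadj hpath T' hT'
end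

section
/- (Shifting strictly increases the maximum Laplacian eigenvalue.) Let T be a tree, u, v ∈ V(T), and ux₁,...,uxₖ ∈ E(T) with k ≥ 1 such that no xᵢ lies on the path from u to v. Let T' be the tree obtained by replacing the edges ux₁,...,uxₖ by vx₁,...,vxₖ. If f is an eigenvector of L(T) for λ(T) and |f(u)| ≤ |f(v)|, then λ(T') > λ(T). -/
/-!
Trees are bipartite, and if `σ = ±1` alternates along the edges of a graph `G`, then
`(σ h)ᵀ L(G) (σ h) = ½ ∑_{a ~ b} (h a + h b)²`, while `L(G) (σ h) = λ σ h` says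
`∑_{b ~ a} (h a + h b) = λ h a` for every `a` (a signless-Laplacian eigenvector).
Put `h = |f|` and let `σ`, `σ'` alternate on `T`, `T'`. The Rayleigh principle gives
`λ(T) ‖f‖² = fᵀ L(T) f ≤ ½ ∑_{E(T)} (h a + h b)² ≤ ½ ∑_{E(T')} (h a + h b)² ≤ λ(T') ‖f‖²`,
the middle step because the shift trades each `(h u + h xᵢ)²` for `(h v + h xᵢ)²`.
If `λ(T') = λ(T)`, equality holds throughout, so `σ h` and `σ' h` are eigenvectors of `L(T)`
and `L(T')`. Subtracting their signless equations at `u` leaves `∑ᵢ (h u + h xᵢ) = 0`, so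
`h u = 0`; the signless equation then propagates zeros along edges, and `f = 0`.
-/

open SimpleGraph Finset Matrix

open scoped Classical in
/-- The Laplacian matrix `L = D - A` of a graph, with real entries. -/
noncomputable def lap {V : Type*} [Fintype V] [DecidableEq V] (G : SimpleGraph V) :
    Matrix V V ℝ :=
  Matrix.of fun u v =>
    (if u = v then (gdeg G u : ℝ) else 0) - (if G.Adj u v then 1 else 0)

/-- `lam` is the largest Laplacian eigenvalue of `G`. -/
def IsMaxEig {V : Type*} [Fintype V] [DecidableEq V] (G : SimpleGraph V) (lam : ℝ) : Prop :=
  IsGreatest {μ : ℝ | ∃ f : V → ℝ, f ≠ 0 ∧ (lap G).mulVec f = μ • f} lam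

section Rayleigh

variable {n : Type*} [Fintype n] [DecidableEq n] {M : Matrix n n ℝ} {lam : ℝ}

theorem Matrix.IsHermitian.posSemidef_smul_one_sub (hM : M.IsHermitian)
    (hlam : lam ∈ upperBounds {μ : ℝ | ∃ g : n → ℝ, g ≠ 0 ∧ M *ᵥ g = μ • g}) :
    (lam • (1 : Matrix n n ℝ) - M).PosSemidef := by
  have hN : (lam • (1 : Matrix n n ℝ) - M).IsHermitian :=
    (isHermitian_one.smul (IsSelfAdjoint.all lam)).sub hM
  refine hN.posSemidef_iff_eigenvalues_nonneg.mpr fun i => ?_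
  set e := ⇑(hN.eigenvectorBasis i)
  have he : e ≠ 0 := by
    simpa [e] using (hN.eigenvectorBasis.orthonormal.ne_zero i)
  have hMe : M *ᵥ e = (lam - hN.eigenvalues i) • e := by
    have := hN.mulVec_eigenvectorBasis i
    rw [sub_mulVec, smul_mulVec, one_mulVec] at this
    rw [sub_smul, ← this]
    abel
  simpa using hlam ⟨e, he, hMe⟩

theorem Matrix.IsHermitian.dotProduct_mulVec_le (hM : M.IsHermitian)
    (hlam : lam ∈ upperBounds {μ : ℝ | ∃ g : n → ℝ, g ≠ 0 ∧ M *ᵥ g = μ • g}) (g : n → ℝ) :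
    g ⬝ᵥ (M *ᵥ g) ≤ lam * (g ⬝ᵥ g) := by
  have := (hM.posSemidef_smul_one_sub hlam).dotProduct_mulVec_nonneg g
  simp only [star_trivial, sub_mulVec, smul_mulVec, one_mulVec, dotProduct_sub,
    dotProduct_smul, smul_eq_mul] at this
  linarith

theorem Matrix.IsHermitian.mulVec_eq_smul_of_dotProduct_mulVec_eq (hM : M.IsHermitian)
    (hlam : lam ∈ upperBounds {μ : ℝ | ∃ g : n → ℝ, g ≠ 0 ∧ M *ᵥ g = μ • g}) {g : n → ℝ}
    (hg : g ⬝ᵥ (M *ᵥ g) = lam * (g ⬝ᵥ g)) :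
    M *ᵥ g = lam • g := by
  have := ((hM.posSemidef_smul_one_sub hlam).dotProduct_mulVec_zero_iff g).mp (by
    simp only [star_trivial, sub_mulVec, smul_mulVec, one_mulVec, dotProduct_sub,
      dotProduct_smul, smul_eq_mul, hg, sub_self])
  rw [sub_mulVec, smul_mulVec, one_mulVec, sub_eq_zero] at this
  exact this.symm

end Rayleigh

theorem lap_eq_lapMatrix {V : Type*} [Fintype V] [DecidableEq V] (G : SimpleGraph V)
    [DecidableRel G.Adj] : lap G = G.lapMatrix ℝ := by
  ext a b
  simp [lap, lapMatrix, degMatrix, adjMatrix, gdeg, diagonal, Set.ncard_eq_toFinset_card',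
    ← card_neighborFinset_eq_degree, neighborFinset_eq_filter]

namespace SimpleGraph

section BipartiteSign

variable {V : Type*}

structure IsBipartiteSign (G : SimpleGraph V) (σ : V → ℝ) : Prop where
  sq_eq_one : ∀ w, σ w ^ 2 = 1
  adj : ∀ ⦃a b⦄, G.Adj a b → σ b = -σ a

namespace IsBipartiteSign

variable {G H : SimpleGraph V} {σ : V → ℝ}

theorem exists_of_colorable_two (hG : G.Colorable 2) : ∃ σ, IsBipartiteSign G σ := by
  obtain ⟨C⟩ := hG
  refine ⟨fun w => (-1) ^ (C w : ℕ), fun w => by simp [← pow_mul, pow_mul'], fun a b hab => ?_⟩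
  have hne := C.valid hab
  generalize C a = i, C b = j at hne ⊢
  fin_cases i <;> fin_cases j <;> simp_all

theorem mono (hσ : IsBipartiteSign G σ) (hHG : H ≤ G) : IsBipartiteSign H σ :=
  ⟨hσ.sq_eq_one, fun _ _ hab => hσ.adj (hHG hab)⟩

theorem sup (hσ : IsBipartiteSign G σ) (hH : ∀ ⦃a b⦄, H.Adj a b → σ b = -σ a) :
    IsBipartiteSign (G ⊔ H) σ :=
  ⟨hσ.sq_eq_one, fun _ _ hab => hab.elim (hσ.adj ·) (hH ·)⟩

theorem mul_connectedComponent (hσ : IsBipartiteSign G σ) (t : G.ConnectedComponent → ℝ)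
    (ht : ∀ c, t c ^ 2 = 1) : IsBipartiteSign G (fun w => t (G.connectedComponentMk w) * σ w) where
  sq_eq_one w := by rw [mul_pow, ht, hσ.sq_eq_one, one_mul]
  adj a b hab := by rw [ConnectedComponent.connectedComponentMk_eq_of_adj hab.symm, hσ.adj hab,
    mul_neg]

theorem dotProduct_mul_self (hσ : IsBipartiteSign G σ) [Fintype V] (h : V → ℝ) :
    (σ * h) ⬝ᵥ (σ * h) = h ⬝ᵥ h :=
  Finset.sum_congr rfl fun w _ => by
    rw [Pi.mul_apply]
    linear_combination (h w * h w) * hσ.sq_eq_one w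

end IsBipartiteSign

end BipartiteSign

section Laplacian

variable {V : Type*} [Fintype V] (G : SimpleGraph V) [DecidableRel G.Adj]

def adjPairs : Finset (V × V) := {p | G.Adj p.1 p.2}

variable {G}

theorem mem_adjPairs {p : V × V} : p ∈ adjPairs G ↔ G.Adj p.1 p.2 := by
  simp [adjPairs]

variable [DecidableEq V]

theorem dotProduct_lapMatrix_mulVec (g : V → ℝ) :
    g ⬝ᵥ (G.lapMatrix ℝ *ᵥ g) = (∑ p ∈ adjPairs G, (g p.1 - g p.2) ^ 2) / 2 := by
  rw [← toLinearMap₂'_apply', lapMatrix_toLinearMap₂', adjPairs, Finset.sum_filter,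
    ← Finset.univ_product_univ, Finset.sum_product]

theorem dotProduct_lapMatrix_mulVec_le_abs (g : V → ℝ) :
    g ⬝ᵥ (G.lapMatrix ℝ *ᵥ g) ≤ (∑ p ∈ adjPairs G, (|g p.1| + |g p.2|) ^ 2) / 2 := by
  rw [dotProduct_lapMatrix_mulVec]
  refine div_le_div_of_nonneg_right (Finset.sum_le_sum fun p _ => ?_) zero_le_two
  exact sq_le_sq.mpr ((abs_sub (g p.1) (g p.2)).trans (le_abs_self _))

namespace IsBipartiteSign

variable {σ : V → ℝ} {lam : ℝ} (hσ : IsBipartiteSign G σ)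
include hσ

theorem lapMatrix_mulVec_mul_apply (h : V → ℝ) (a : V) :
    (G.lapMatrix ℝ *ᵥ (σ * h)) a = σ a * ∑ b ∈ G.neighborFinset a, (h a + h b) := by
  rw [lapMatrix_mulVec_apply, ← card_neighborFinset_eq_degree, Finset.mul_sum, ← nsmul_eq_mul,
    ← Finset.sum_const, ← Finset.sum_sub_distrib]
  refine Finset.sum_congr rfl fun b hb => ?_
  rw [Pi.mul_apply, Pi.mul_apply, hσ.adj ((mem_neighborFinset G a b).mp hb)]
  ring

theorem dotProduct_lapMatrix_mulVec_mul (h : V → ℝ) :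
    (σ * h) ⬝ᵥ (G.lapMatrix ℝ *ᵥ (σ * h)) = (∑ p ∈ adjPairs G, (h p.1 + h p.2) ^ 2) / 2 := by
  rw [dotProduct_lapMatrix_mulVec]
  congr 1
  refine Finset.sum_congr rfl fun p hp => ?_
  rw [Pi.mul_apply, Pi.mul_apply, hσ.adj (mem_adjPairs.mp hp)]
  linear_combination (h p.1 + h p.2) ^ 2 * hσ.sq_eq_one p.1

theorem sum_adjPairs_le
    (hlam : lam ∈ upperBounds {μ : ℝ | ∃ g : V → ℝ, g ≠ 0 ∧ G.lapMatrix ℝ *ᵥ g = μ • g})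
    (h : V → ℝ) :
    (∑ p ∈ adjPairs G, (h p.1 + h p.2) ^ 2) / 2 ≤ lam * (h ⬝ᵥ h) := by
  rw [← hσ.dotProduct_lapMatrix_mulVec_mul, ← hσ.dotProduct_mul_self]
  exact (isHermitian_lapMatrix ℝ G).dotProduct_mulVec_le hlam _

theorem sum_neighborFinset_eq_of_sum_adjPairs_eq
    (hlam : lam ∈ upperBounds {μ : ℝ | ∃ g : V → ℝ, g ≠ 0 ∧ G.lapMatrix ℝ *ᵥ g = μ • g})
    {h : V → ℝ} (heq : (∑ p ∈ adjPairs G, (h p.1 + h p.2) ^ 2) / 2 = lam * (h ⬝ᵥ h)) (a : V) :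
    ∑ b ∈ G.neighborFinset a, (h a + h b) = lam * h a := by
  rw [← hσ.dotProduct_lapMatrix_mulVec_mul, ← hσ.dotProduct_mul_self] at heq
  have := congrFun ((isHermitian_lapMatrix ℝ G).mulVec_eq_smul_of_dotProduct_mulVec_eq hlam heq) a
  rw [hσ.lapMatrix_mulVec_mul_apply, Pi.smul_apply, Pi.mul_apply, smul_eq_mul] at this
  linear_combination
    σ a * this - (∑ b ∈ G.neighborFinset a, (h a + h b) - lam * h a) * hσ.sq_eq_one a

end IsBipartiteSign

omit [DecidableEq V] in
theorem eq_zero_of_sum_neighborFinset_eq (hG : G.Preconnected) {h : V → ℝ} (hh : 0 ≤ h)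
    {μ : ℝ} (heig : ∀ a, ∑ b ∈ G.neighborFinset a, (h a + h b) = μ * h a) {u : V}
    (hu : h u = 0) : h = 0 := by
  have hstep : ∀ ⦃a b⦄, G.Adj a b → h a = 0 → h b = 0 := fun a b hab ha => by
    have hsum : ∑ c ∈ G.neighborFinset a, h c = 0 := by simpa [ha] using heig a
    exact (Finset.sum_eq_zero_iff_of_nonneg fun c _ => hh c).mp hsum b
      ((mem_neighborFinset G a b).mpr hab)
  funext w
  induction (reachable_iff_reflTransGen u w).mp (hG u w) with
  | refl => exact hu
  | tail _ hab ih => exact hstep hab ih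

end Laplacian

section Shift

variable {V ι : Type*} (T : SimpleGraph V) (u v : V) (x : ι → V)

def shiftGraph : SimpleGraph V :=
  T.deleteEdges (Set.range fun i => s(u, x i)) ⊔ fromEdgeSet (Set.range fun i => s(v, x i))

variable {T u v x}

theorem ne_of_forall_path (hpath : ∀ p : T.Path u v, ∀ i, x i ∉ p.1.support)
    (hr : T.Reachable u v) (i : ι) : x i ≠ v := by
  classical
  exact fun h => hpath hr.some.toPath i (by rw [h]; exact Walk.end_mem_support _)

theorem not_adj_of_forall_path (huv : u ≠ v) (hadj : ∀ i, T.Adj u (x i)) (hxv : ∀ i, x i ≠ v)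
    (hpath : ∀ p : T.Path u v, ∀ i, x i ∉ p.1.support) (i : ι) : ¬T.Adj v (x i) := fun hvx =>
  hpath ⟨.cons (hadj i) (.cons hvx.symm .nil), by simp [(hadj i).ne, huv, hxv i]⟩ i (by simp)

theorem IsTree.exists_isBipartiteSign_shiftGraph (hT : T.IsTree) (hadj : ∀ i, T.Adj u (x i))
    (hpath : ∀ p : T.Path u v, ∀ i, x i ∉ p.1.support) :
    ∃ σ, IsBipartiteSign (shiftGraph T u v x) σ := by
  classical
  obtain ⟨σ, hσ⟩ := IsBipartiteSign.exists_of_colorable_two hT.colorable_two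
  unfold shiftGraph
  set D := T.deleteEdges (Set.range fun i => s(u, x i))
  have hv : D.connectedComponentMk v = D.connectedComponentMk u := by
    let p := (hT.connected.preconnected u v).some.toPath
    refine (ConnectedComponent.eq.mpr ⟨p.1.toDeleteEdges _ ?_⟩).symm
    rintro e he ⟨i, rfl⟩
    exact hpath p i (Walk.snd_mem_support_of_mem_edges _ he)
  have hx : ∀ i, D.connectedComponentMk (x i) ≠ D.connectedComponentMk u := fun i h =>
    isAcyclic_iff_forall_adj_isBridge.mp hT.isAcyclic (hadj i)
      ((ConnectedComponent.eq.mp h.symm).mono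
        (deleteEdges_anti (Set.singleton_subset_iff.mpr (Set.mem_range_self i))))
  -- `σ (x i) = -σ u`, so rescaling by `σ u * σ v` off the component of `u` in `D` makes the
  -- sign alternate along each new edge `v xᵢ`.
  let t : D.ConnectedComponent → ℝ := fun c =>
    if c = D.connectedComponentMk u then 1 else σ u * σ v
  have ht : ∀ c, t c ^ 2 = 1 := fun c => by
    by_cases hc : c = D.connectedComponentMk u
    · simp [t, hc]
    · simp [t, hc, mul_pow, hσ.sq_eq_one]
  have htv : t (D.connectedComponentMk v) = 1 := if_pos hv
  have htx : ∀ i, t (D.connectedComponentMk (x i)) = σ u * σ v := fun i => if_neg (hx i)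
  have hσD : IsBipartiteSign D σ := hσ.mono (deleteEdges_le _)
  refine ⟨_, (hσD.mul_connectedComponent t ht).sup ?_⟩
  intro a b hab
  obtain ⟨⟨i, hi⟩, -⟩ := hab
  rcases Sym2.eq_iff.mp hi with ⟨rfl, rfl⟩ | ⟨rfl, rfl⟩
  all_goals
    simp only [htv, htx, hσ.adj (hadj i)]
    linear_combination -σ v * hσ.sq_eq_one u

variable [DecidableEq V] [Fintype ι]

def starPairs (w : V) (X : Finset V) : Finset (V × V) := {w} ×ˢ X ∪ X ×ˢ {w}

theorem mem_starPairs {w : V} {X : Finset V} {a b : V} :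
    (a, b) ∈ starPairs w X ↔ a = w ∧ b ∈ X ∨ a ∈ X ∧ b = w := by
  simp [starPairs, eq_comm, and_comm]

theorem sum_starPairs {M : Type*} [AddCommMonoid M] {w : V} {X : Finset V} (hw : w ∉ X)
    (F : V × V → M) : ∑ p ∈ starPairs w X, F p = ∑ b ∈ X, (F (w, b) + F (b, w)) := by
  rw [starPairs, Finset.sum_union, Finset.sum_add_distrib, Finset.singleton_product,
    Finset.product_singleton, Finset.sum_map, Finset.sum_map]
  · rfl
  · simp only [Finset.disjoint_left, Finset.mem_product, Finset.mem_singleton]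
    rintro _ ⟨rfl, -⟩ ⟨hw', -⟩
    exact hw hw'

theorem shiftGraph_adj (hxv : ∀ i, x i ≠ v) {a b : V} :
    (shiftGraph T u v x).Adj a b ↔
      T.Adj a b ∧ (a, b) ∉ starPairs u (univ.image x) ∨ (a, b) ∈ starPairs v (univ.image x) := by
  simp only [shiftGraph, sup_adj, deleteEdges_adj, fromEdgeSet_adj, Set.mem_range, Sym2.eq_iff,
    mem_starPairs, Finset.mem_image, Finset.mem_univ, true_and]
  grind

section Finite

variable [Fintype V] [DecidableRel T.Adj] [DecidableRel (shiftGraph T u v x).Adj]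

theorem adjPairs_shiftGraph (hxv : ∀ i, x i ≠ v) :
    adjPairs (shiftGraph T u v x) =
      adjPairs T \ starPairs u (univ.image x) ∪ starPairs v (univ.image x) := by
  ext ⟨a, b⟩
  simp only [mem_adjPairs, shiftGraph_adj hxv, Finset.mem_union, Finset.mem_sdiff]

theorem sum_adjPairs_shiftGraph_add {M : Type*} [AddCommMonoid M]
    (hadj : ∀ i, T.Adj u (x i)) (hnadj : ∀ i, ¬T.Adj v (x i)) (hxv : ∀ i, x i ≠ v)
    (F : V × V → M) :
    ∑ p ∈ adjPairs (shiftGraph T u v x), F p + ∑ p ∈ starPairs u (univ.image x), F p =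
      ∑ p ∈ adjPairs T, F p + ∑ p ∈ starPairs v (univ.image x), F p := by
  have hsub : starPairs u (univ.image x) ⊆ adjPairs T := by
    rintro ⟨a, b⟩ hp
    rw [mem_adjPairs]
    rcases mem_starPairs.mp hp with ⟨rfl, hb⟩ | ⟨ha, rfl⟩
    · obtain ⟨i, -, rfl⟩ := Finset.mem_image.mp hb
      exact hadj i
    · obtain ⟨i, -, rfl⟩ := Finset.mem_image.mp ha
      exact (hadj i).symm
  have hdisj : Disjoint (adjPairs T \ starPairs u (univ.image x)) (starPairs v (univ.image x)) := by
    refine Finset.disjoint_left.mpr fun ⟨a, b⟩ hp hq => ?_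
    have hab := mem_adjPairs.mp (Finset.mem_sdiff.mp hp).1
    rcases mem_starPairs.mp hq with ⟨rfl, hb⟩ | ⟨ha, rfl⟩
    · obtain ⟨i, -, rfl⟩ := Finset.mem_image.mp hb
      exact hnadj i hab
    · obtain ⟨i, -, rfl⟩ := Finset.mem_image.mp ha
      exact hnadj i hab.symm
  rw [adjPairs_shiftGraph hxv, Finset.sum_union hdisj, add_right_comm, Finset.sum_sdiff hsub]

theorem sum_adjPairs_le_sum_adjPairs_shiftGraph (hadj : ∀ i, T.Adj u (x i))
    (hnadj : ∀ i, ¬T.Adj v (x i)) (hxv : ∀ i, x i ≠ v) {h : V → ℝ} (hh : 0 ≤ h)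
    (hhuv : h u ≤ h v) :
    ∑ p ∈ adjPairs T, (h p.1 + h p.2) ^ 2 ≤
      ∑ p ∈ adjPairs (shiftGraph T u v x), (h p.1 + h p.2) ^ 2 := by
  have hshift := sum_adjPairs_shiftGraph_add hadj hnadj hxv fun p => (h p.1 + h p.2) ^ 2
  rw [sum_starPairs (by simpa using fun i => (hadj i).ne'), sum_starPairs (by simpa using hxv)]
    at hshift
  have hstar : ∑ b ∈ univ.image x, ((h u + h b) ^ 2 + (h b + h u) ^ 2) ≤
      ∑ b ∈ univ.image x, ((h v + h b) ^ 2 + (h b + h v) ^ 2) :=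
    Finset.sum_le_sum fun b _ => by
      have hb : 0 ≤ h b := hh b
      have hu : 0 ≤ h u := hh u
      nlinarith
  linarith

theorem neighborFinset_shiftGraph_self (huv : u ≠ v) (hadj : ∀ i, T.Adj u (x i))
    (hxv : ∀ i, x i ≠ v) :
    (shiftGraph T u v x).neighborFinset u = T.neighborFinset u \ univ.image x := by
  ext b
  have hxu : ∀ i, x i ≠ u := fun i => (hadj i).ne'
  simp only [mem_neighborFinset, shiftGraph_adj hxv, mem_starPairs, Finset.mem_sdiff,
    Finset.mem_image, Finset.mem_univ, true_and]
  grind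

theorem apply_eq_zero_of_sum_neighborFinset_shiftGraph_self_eq [Nonempty ι] (huv : u ≠ v)
    (hadj : ∀ i, T.Adj u (x i)) (hxv : ∀ i, x i ≠ v) {h : V → ℝ} (hh : 0 ≤ h) {μ : ℝ}
    (hT : ∑ b ∈ T.neighborFinset u, (h u + h b) = μ * h u)
    (hT' : ∑ b ∈ (shiftGraph T u v x).neighborFinset u, (h u + h b) = μ * h u) :
    h u = 0 := by
  have hsub : univ.image x ⊆ T.neighborFinset u := by
    simpa [Finset.subset_iff] using hadj
  rw [neighborFinset_shiftGraph_self huv hadj hxv, ← hT, ← Finset.sum_sdiff hsub,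
    left_eq_add] at hT'
  obtain ⟨i⟩ := ‹Nonempty ι›
  have hi := (Finset.sum_eq_zero_iff_of_nonneg fun b _ => add_nonneg (hh u) (hh b)).mp hT' (x i)
    (Finset.mem_image_of_mem x (Finset.mem_univ i))
  have hu : 0 ≤ h u := hh u
  have hxi : 0 ≤ h (x i) := hh (x i)
  linarith

end Finite

end Shift

end SimpleGraph

theorem stmt7_general {V : Type*} [Fintype V] [DecidableEq V] (T : SimpleGraph V)
    (hT : T.IsTree) (u v : V) (huv : u ≠ v) (k : ℕ) (hk : 1 ≤ k) (x : Fin k → V)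
    (hadj : ∀ i, T.Adj u (x i))
    (hpath : ∀ p : T.Path u v, ∀ i, x i ∉ p.1.support)
    (T' : SimpleGraph V)
    (hT' : T' = (T.deleteEdges (Set.range fun i => s(u, x i))) ⊔
        SimpleGraph.fromEdgeSet (Set.range fun i => s(v, x i)))
    (lam lam' : ℝ) (hlam : IsMaxEig T lam) (hlam' : IsMaxEig T' lam')
    (f : V → ℝ) (hf : f ≠ 0) (hef : (lap T).mulVec f = lam • f)
    (hfuv : |f u| ≤ |f v|) :
    lam < lam' := by
  classical
  change T' = shiftGraph T u v x at hT'
  subst hT'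
  simp only [IsMaxEig, lap_eq_lapMatrix] at hlam hlam' hef
  have : Nonempty (Fin k) := ⟨⟨0, hk⟩⟩
  have hxv := ne_of_forall_path hpath (hT.connected.preconnected u v)
  obtain ⟨σ, hσ⟩ := IsBipartiteSign.exists_of_colorable_two hT.colorable_two
  obtain ⟨σ', hσ'⟩ := hT.exists_isBipartiteSign_shiftGraph hadj hpath
  set h : V → ℝ := fun w => |f w|
  have hh : 0 ≤ h := fun w => abs_nonneg (f w)
  have hnorm : h ⬝ᵥ h = f ⬝ᵥ f := Finset.sum_congr rfl fun w _ => abs_mul_abs_self (f w)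
  have hpos : 0 < f ⬝ᵥ f := by simpa using dotProduct_star_self_pos_iff.mpr hf
  have hlow : lam * (f ⬝ᵥ f) ≤ (∑ p ∈ adjPairs T, (h p.1 + h p.2) ^ 2) / 2 := by
    simpa [hef] using dotProduct_lapMatrix_mulVec_le_abs (G := T) f
  have hmid := sum_adjPairs_le_sum_adjPairs_shiftGraph hadj
    (not_adj_of_forall_path huv hadj hxv hpath) hxv hh hfuv
  have hup := hσ.sum_adjPairs_le hlam.2 h
  have hup' := hσ'.sum_adjPairs_le hlam'.2 h
  rw [hnorm] at hup hup'
  refine (le_of_mul_le_mul_right (by linarith) hpos).lt_of_ne fun heq => hf ?_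
  subst heq
  have heig := hσ.sum_neighborFinset_eq_of_sum_adjPairs_eq hlam.2 (by rw [hnorm]; linarith)
  have heig' := hσ'.sum_neighborFinset_eq_of_sum_adjPairs_eq hlam'.2 (by rw [hnorm]; linarith)
  have hu := apply_eq_zero_of_sum_neighborFinset_shiftGraph_self_eq huv hadj hxv hh
    (heig u) (heig' u)
  have hzero := eq_zero_of_sum_neighborFinset_eq hT.connected.preconnected hh heig hu
  exact funext fun w => abs_eq_zero.mp (congrFun hzero w)

/-- Shifting strictly increases the largest Laplacian eigenvalue: if the edges
`u x₁, …, u xₖ` (k ≥ 1, no `xᵢ` on the `uv`-path) are replaced by `v x₁, …, v xₖ`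
and `|f u| ≤ |f v|` for an eigenvector `f` of `λ(T)`, then `λ(T') > λ(T)`. -/
theorem stmt7 {V : Type*} [Fintype V] [DecidableEq V] (T : SimpleGraph V)
    (hT : T.IsTree) (u v : V) (huv : u ≠ v) (k : ℕ) (hk : 1 ≤ k) (x : Fin k → V)
    (hinj : Function.Injective x) (hadj : ∀ i, T.Adj u (x i))
    (hpath : ∀ p : T.Path u v, ∀ i, x i ∉ p.1.support)
    (T' : SimpleGraph V)
    (hT' : T' = (T.deleteEdges (Set.range fun i => s(u, x i))) ⊔
        SimpleGraph.fromEdgeSet (Set.range fun i => s(v, x i)))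
    (lam lam' : ℝ) (hlam : IsMaxEig T lam) (hlam' : IsMaxEig T' lam')
    (f : V → ℝ) (hf : f ≠ 0) (hef : (lap T).mulVec f = lam • f)
    (hfuv : |f u| ≤ |f v|) :
    lam < lam' :=
  stmt7_general T hT u v huv k hk x hadj hpath T' hT' lam lam' hlam hlam' f hf hef hfuv
end

section
/- The degree sequence π_{n,k} = (k, 2, ..., 2, 1, ..., 1) (one entry k, n-k-1 entries 2, and k entries 1) is maximal with respect to ⊲ among all non-increasing tree degree sequences of length n with exactly k entries equal to 1: every such sequence π with π ≠ π_{n,k} satisfies π ⊲ π_{n,k}. -/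
open Finset

/-!
Outside its first entry, `π_{n,k}` is the smallest positive non-increasing sequence with exactly
`k` ones: the ones of such a sequence must fill its last `k` positions, and every earlier entry is
at least `2`. Both sequences sum to `2(n-1)`, so every tail sum of `π` dominates the corresponding
tail sum of `π_{n,k}`, and passing to complements gives the prefix sums.
-/

theorem sum_le_sum_of_sum_univ_eq_of_le_on_compl {ι M : Type*} [Fintype ι] [DecidableEq ι]
    [AddCommMonoid M] [PartialOrder M] [IsOrderedCancelAddMonoid M] {f g : ι → M}
    (s : Finset ι) (hsum : ∑ i, f i = ∑ i, g i) (hle : ∀ i ∉ s, g i ≤ f i) :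
    ∑ i ∈ s, f i ≤ ∑ i ∈ s, g i := by
  have hcompl : ∑ i ∈ sᶜ, g i ≤ ∑ i ∈ sᶜ, f i :=
    sum_le_sum fun i hi => hle i (mem_compl.1 hi)
  refine le_of_add_le_add_right (a := ∑ i ∈ sᶜ, g i) ?_
  calc ∑ i ∈ s, f i + ∑ i ∈ sᶜ, g i ≤ ∑ i ∈ s, f i + ∑ i ∈ sᶜ, f i := add_le_add_right hcompl _
    _ = ∑ i ∈ s, g i + ∑ i ∈ sᶜ, g i := by rw [sum_add_sum_compl, sum_add_sum_compl, hsum]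

/-- `π_{n,k} = (k, 2, …, 2, 1, …, 1)`, the degree sequence of a spider with `k` legs. -/
def spiderDegSeq (n k : ℕ) (i : Fin n) : ℕ :=
  if (i : ℕ) = 0 then k else if (i : ℕ) < n - k then 2 else 1

theorem sum_spiderDegSeq {n k : ℕ} (hkn : k < n) : ∑ i, spiderDegSeq n k i = 2 * (n - 1) := by
  obtain ⟨m, rfl⟩ : ∃ m, n = m + k + 1 := ⟨n - k - 1, by omega⟩
  simp only [spiderDegSeq, show m + k + 1 - k = m + 1 by omega]
  rw [Fin.sum_univ_eq_sum_range (fun i => if i = 0 then k else if i < m + 1 then 2 else 1),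
    sum_range_succ', sum_range_add]
  have htwos : ∀ i ∈ range m, (if i + 1 = 0 then k else if i + 1 < m + 1 then 2 else 1) = 2 :=
    fun i hi => by rw [mem_range] at hi; rw [if_neg (by omega), if_pos (by omega)]
  have hones : ∀ i ∈ range k, (if m + i + 1 = 0 then k else if m + i + 1 < m + 1 then 2 else 1) = 1 :=
    fun i _ => by rw [if_neg (by omega), if_neg (by omega)]
  rw [sum_congr rfl htwos, sum_congr rfl hones]
  simp only [sum_const, card_range, smul_eq_mul, mul_one, ↓reduceIte, add_tsub_cancel_right]
  omega

section PositiveAntitone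

variable {n k : ℕ} {π : Fin n → ℕ}

theorem apply_eq_one_of_sub_card_le (hpos : ∀ i, 0 < π i) (hanti : Antitone π)
    (hones : #{i | π i = 1} = k) {i : Fin n} (hi : n - k ≤ i) : π i = 1 := by
  by_contra hne
  have hsub : ({t | π t = 1} : Finset (Fin n)) ⊆ Ioi i := fun t ht => by
    rw [mem_filter] at ht
    by_contra hti
    have := hanti (not_lt.1 (mem_Ioi.not.1 hti))
    have := hpos i
    omega
  have := card_le_card hsub
  rw [hones, Fin.card_Ioi] at this
  omega

theorem two_le_apply_of_lt_sub_card (hpos : ∀ i, 0 < π i) (hanti : Antitone π)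
    (hones : #{i | π i = 1} = k) {i : Fin n} (hi : i < n - k) : 2 ≤ π i := by
  by_contra hlt
  have hsub : Ici i ⊆ ({t | π t = 1} : Finset (Fin n)) := fun t ht => by
    have := hanti (mem_Ici.1 ht)
    have := hpos t
    rw [mem_filter]
    exact ⟨mem_univ t, by omega⟩
  have := card_le_card hsub
  rw [hones, Fin.card_Ici] at this
  omega

theorem spiderDegSeq_le (hpos : ∀ i, 0 < π i) (hanti : Antitone π)
    (hones : #{i | π i = 1} = k) {i : Fin n} (hi : (i : ℕ) ≠ 0) : spiderDegSeq n k i ≤ π i := by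
  unfold spiderDegSeq
  split_ifs with h0 hlt
  · exact absurd h0 hi
  · exact two_le_apply_of_lt_sub_card hpos hanti hones hlt
  · exact (apply_eq_one_of_sub_card_le hpos hanti hones (not_lt.1 hlt)).ge

end PositiveAntitone

theorem stmt17_general (n k : ℕ) (hkn : k ≤ n - 1) (π : Fin n → ℕ)
    (hpos : ∀ i, 0 < π i) (hmono : ∀ i j : Fin n, i ≤ j → π j ≤ π i)
    (hsum : ∑ i, π i = 2 * (n - 1))
    (hones : (Finset.univ.filter fun i => π i = 1).card = k) :
    ∀ j : Fin n, ∑ i ∈ Finset.Iic j, π i ≤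
      ∑ i ∈ Finset.Iic j,
        (if (i : ℕ) = 0 then k else if (i : ℕ) < n - k then 2 else 1) := by
  intro j
  have hk : k < n := by have := j.pos; omega
  refine sum_le_sum_of_sum_univ_eq_of_le_on_compl (g := spiderDegSeq n k) _
    (hsum.trans (sum_spiderDegSeq hk).symm) fun i hi => spiderDegSeq_le hpos hmono hones ?_
  have : (j : ℕ) < i := not_le.1 (mem_Iic.not.1 hi : ¬ i ≤ j)
  omega

/-- The sequence `π_{n,k} = (k, 2, …, 2, 1, …, 1)` (with `n-k-1` twos and `k`
ones) is maximal w.r.t. `⊲` among non-increasing tree degree sequences of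
length `n` with exactly `k` entries equal to `1`. -/
theorem stmt17 (n k : ℕ) (hk2 : 2 ≤ k) (hkn : k ≤ n - 1) (π : Fin n → ℕ)
    (hpos : ∀ i, 0 < π i) (hmono : ∀ i j : Fin n, i ≤ j → π j ≤ π i)
    (hsum : ∑ i, π i = 2 * (n - 1))
    (hones : (Finset.univ.filter fun i => π i = 1).card = k)
    (hne : π ≠ fun i : Fin n =>
      if (i : ℕ) = 0 then k else if (i : ℕ) < n - k then 2 else 1) :
    ∀ j : Fin n, ∑ i ∈ Finset.Iic j, π i ≤
      ∑ i ∈ Finset.Iic j,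
        (if (i : ℕ) = 0 then k else if (i : ℕ) < n - k then 2 else 1) :=
  stmt17_general n k hkn π hpos hmono hsum hones
end
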